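/- Let A ⊆ B ⊆ C be measurable sets of finite positive measure in (M, m) and let X be a fundamental domain of finite positive measure for a measure-preserving Γ-action, such that m(A ∩ γ·X) ≠ 0 implies γ·X ⊆ B and m(B ∩ γ·X) ≠ 0 implies γ·X ⊆ C. If a sequence of such triples (A_n, B_n, C_n) satisfies lim m(A_n)/m(C_n) = 1, then lim_{n→∞} N_b(X; B_n)/m(B_n) = 0, where N_b(X; B) is the number of γ with γ·X meeting both B and its complement in positive measure. -/

import Mathlib

open MeasureTheory Set Pointwise ENNReal Filter

/-- The number of translates `γ • X` meeting both `D` and its complement in positive measure. -/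
noncomputable def boundaryCount {M : Type*} [MeasurableSpace M] (Γ : Type*) [Group Γ]
    [MulAction Γ M] (μ : Measure M) (X D : Set M) : ℕ∞ :=
  {γ : Γ | μ ((γ • X) ∩ D) ≠ 0 ∧ μ ((γ • X) ∩ Dᶜ) ≠ 0}.encard

/-!
Every boundary translate `γ • X` of `B` lies in `C` (it meets `B`) and is almost disjoint from `A`
(a translate meeting `A` lies inside `B`, so cannot meet `Bᶜ`). Since distinct translates are
almost disjoint, the boundary translates fill at most `C \ A`, so
`N_b(B) · μ X ≤ μ C - μ A`. Dividing by `μ B ≥ μ A` bounds `N_b(B) / μ B` by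
`(μ C / μ A - 1) / μ X`, which tends to zero.
-/

theorem ENNReal.tendsto_sub_div_of_div_tendsto_one {ι : Type*} {l : Filter ι} {a c : ι → ℝ≥0∞}
    (ha0 : ∀ i, a i ≠ 0) (haTop : ∀ i, a i ≠ ⊤) (h : Tendsto (fun i => a i / c i) l (nhds 1)) :
    Tendsto (fun i => (c i - a i) / a i) l (nhds 0) := by
  have hinv : Tendsto (fun i => c i / a i) l (nhds 1) := by
    simpa only [inv_one, ENNReal.inv_div (Or.inr (haTop _)) (Or.inr (ha0 _))] using h.inv
  have hsub : Tendsto (fun i => c i / a i - 1) l (nhds 0) := by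
    simpa using ENNReal.Tendsto.sub hinv tendsto_const_nhds (Or.inr one_ne_top)
  refine hsub.congr fun i => ?_
  rw [ENNReal.sub_div fun _ _ => ha0 i, ENNReal.div_self (ha0 i) (haTop i)]

namespace MeasureTheory.IsFundamentalDomain

variable {M Γ : Type*} [MeasurableSpace M] [Group Γ] [Countable Γ] [MulAction Γ M]
  [MeasurableConstSMul Γ M] {μ : Measure M} [SMulInvariantMeasure Γ M μ] {X : Set M}

theorem encard_mul_measure_le (hX : IsFundamentalDomain Γ X μ) {S : Set Γ} {D : Set M}
    (hS : ∀ γ ∈ S, μ X ≤ μ (D ∩ γ • X)) : (S.encard : ℝ≥0∞) * μ X ≤ μ D :=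
  calc (S.encard : ℝ≥0∞) * μ X = ∑' _ : S, μ X := (ENNReal.tsum_set_const _ _).symm
    _ ≤ ∑' γ : S, μ (D ∩ (γ : Γ) • X) := ENNReal.tsum_le_tsum fun γ => hS γ γ.2
    _ ≤ ∑' γ : Γ, μ (D ∩ γ • X) :=
      ENNReal.tsum_comp_le_tsum_of_injective Subtype.val_injective _
    _ = μ D := (hX.measure_eq_tsum' D).symm

theorem boundaryCount_mul_measure_le (hX : IsFundamentalDomain Γ X μ) {A B C : Set M}
    (hΓA : ∀ γ : Γ, μ (A ∩ γ • X) ≠ 0 → γ • X ⊆ B)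
    (hΓB : ∀ γ : Γ, μ (B ∩ γ • X) ≠ 0 → γ • X ⊆ C) :
    (boundaryCount Γ μ X B : ℝ≥0∞) * μ X ≤ μ (C \ A) := by
  refine hX.encard_mul_measure_le fun γ ⟨hmeetsB, hmeetsBc⟩ => ?_
  have hA : μ (γ • X ∩ A) = 0 := by
    by_contra hmeetsA
    have hB : γ • X ⊆ B := hΓA γ (by rwa [inter_comm] at hmeetsA)
    exact hmeetsBc (measure_mono_null (fun x hx => hx.2 (hB hx.1)) measure_empty)
  have hC : γ • X ⊆ C := hΓB γ (by rwa [inter_comm] at hmeetsB)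
  calc μ X = μ (γ • X \ A) := by rw [measure_sdiff_null' hA, measure_smul]
    _ ≤ μ ((C \ A) ∩ γ • X) := measure_mono fun x hx => ⟨⟨hC hx.1, hx.2⟩, hx.1⟩

end MeasureTheory.IsFundamentalDomain

theorem boundaryCount_div_measure_tendsto_zero_general
    {M : Type*} [MeasurableSpace M]
    {Γ : Type*} [Group Γ] [Countable Γ] [MulAction Γ M]
    (hmeasΓ : ∀ γ : Γ, Measurable fun x : M => γ • x)
    (μ : Measure M) [SMulInvariantMeasure Γ M μ]
    (X : Set M) (hX : IsFundamentalDomain Γ X μ)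
    (hX0 : 0 < μ X) (hXfin : μ X ≠ ⊤)
    (A B C : ℕ → Set M)
    (hmeasA : ∀ n, MeasurableSet (A n))
    (hAB : ∀ n, A n ⊆ B n) (hBC : ∀ n, B n ⊆ C n)
    (hA0 : ∀ n, 0 < μ (A n)) (hCfin : ∀ n, μ (C n) ≠ ⊤)
    (hΓA : ∀ n, ∀ γ : Γ, μ (A n ∩ γ • X) ≠ 0 → γ • X ⊆ B n)
    (hΓB : ∀ n, ∀ γ : Γ, μ (B n ∩ γ • X) ≠ 0 → γ • X ⊆ C n)
    (hlim : Tendsto (fun n => μ (A n) / μ (C n)) atTop (nhds 1)) :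
    Tendsto (fun n => (boundaryCount Γ μ X (B n) : ℝ≥0∞) / μ (B n)) atTop (nhds 0) := by
  have : MeasurableConstSMul Γ M := ⟨hmeasΓ⟩
  have hAfin n : μ (A n) ≠ ⊤ := measure_ne_top_of_subset ((hAB n).trans (hBC n)) (hCfin n)
  have hbound n : (boundaryCount Γ μ X (B n) : ℝ≥0∞) / μ (B n)
      ≤ (μ (C n) - μ (A n)) / μ (A n) / μ X := by
    have hcount : (boundaryCount Γ μ X (B n) : ℝ≥0∞) * μ X ≤ μ (C n) - μ (A n) := by
      rw [← measure_sdiff ((hAB n).trans (hBC n)) (hmeasA n).nullMeasurableSet (hAfin n)]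
      exact hX.boundaryCount_mul_measure_le (hΓA n) (hΓB n)
    rw [ENNReal.le_div_iff_mul_le (Or.inl hX0.ne') (Or.inl hXfin), ← ENNReal.mul_div_right_comm]
    exact ENNReal.div_le_div hcount (measure_mono (hAB n))
  have hlim' := ENNReal.Tendsto.div_const
    (ENNReal.tendsto_sub_div_of_div_tendsto_one (fun n => (hA0 n).ne') hAfin hlim)
    (Or.inr hX0.ne')
  rw [ENNReal.zero_div] at hlim'
  exact tendsto_of_tendsto_of_tendsto_of_le_of_le tendsto_const_nhds hlim' (fun _ => zero_le)
    hbound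

/-- For sandwiched sequences `A n ⊆ B n ⊆ C n` with `μ (A n)/μ (C n) → 1` and the
translate conditions, the relative boundary count of `B n` tends to zero. -/
theorem boundaryCount_div_measure_tendsto_zero
    {M : Type*} [MeasurableSpace M]
    {Γ : Type*} [Group Γ] [Countable Γ] [MulAction Γ M]
    (hmeasΓ : ∀ γ : Γ, Measurable fun x : M => γ • x)
    (μ : Measure M) [SigmaFinite μ] [SMulInvariantMeasure Γ M μ]
    (X : Set M) (hXmeas : MeasurableSet X) (hX : IsFundamentalDomain Γ X μ)
    (hX0 : 0 < μ X) (hXfin : μ X ≠ ⊤)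
    (A B C : ℕ → Set M)
    (hmeasA : ∀ n, MeasurableSet (A n)) (hmeasB : ∀ n, MeasurableSet (B n))
    (hmeasC : ∀ n, MeasurableSet (C n))
    (hAB : ∀ n, A n ⊆ B n) (hBC : ∀ n, B n ⊆ C n)
    (hA0 : ∀ n, 0 < μ (A n)) (hCfin : ∀ n, μ (C n) ≠ ⊤)
    (hΓA : ∀ n, ∀ γ : Γ, μ (A n ∩ γ • X) ≠ 0 → γ • X ⊆ B n)
    (hΓB : ∀ n, ∀ γ : Γ, μ (B n ∩ γ • X) ≠ 0 → γ • X ⊆ C n)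
    (hlim : Tendsto (fun n => μ (A n) / μ (C n)) atTop (nhds 1)) :
    Tendsto (fun n => (boundaryCount Γ μ X (B n) : ℝ≥0∞) / μ (B n)) atTop (nhds 0) :=
  boundaryCount_div_measure_tendsto_zero_general hmeasΓ μ X hX hX0 hXfin A B C hmeasA hAB hBC hA0
    hCfin hΓA hΓB hlim
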